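/- For every k ≥ 0, with J̄_k := J*⁻¹(J_k − J*), Broyden's 'good' update satisfies σ_{k+1}² ≤ σ_k² − (λ_{k+1}²/λ_k²)·‖J*⁻¹B_k u_k‖²/‖u_k‖² + 2(σ_k‖J̄_k‖ + ‖J̄_k‖²). -/

import Mathlib

/-! With `E = J*⁻¹(B_k − J*)`, `G = J*⁻¹(J_k − J*)` and `u = u_k`, the identities `B_k u = −F(x_k)`
and `y_k = J_k u` turn the update into `E_{k+1} = E (I − P) + G P`, where `P` is the orthogonal
projection onto `u`; Pythagoras gives `σ_{k+1}² = σ_k² − ‖E u‖²/‖u‖² + ‖G u‖²/‖u‖²`.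
Since `J*⁻¹F(x_{k+1}) = (G − E) u` and `‖J*⁻¹B_k u‖ = λ_k`, the subtracted term is at most
`‖(G − E) u‖²/‖u‖²`, and the triangle inequality bounds `‖G u‖² + ‖(G − E) u‖² − ‖E u‖²`
by `2 (σ_k ‖G‖ + ‖G‖²) ‖u‖²`. -/

open Matrix MeasureTheory

noncomputable def specNorm {n : ℕ} (A : Matrix (Fin n) (Fin n) ℝ) : ℝ :=
  ‖Matrix.toEuclideanCLM (𝕜 := ℝ) A‖

noncomputable def frobNorm {n : ℕ} (A : Matrix (Fin n) (Fin n) ℝ) : ℝ :=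
  Real.sqrt (∑ i, ∑ j, (A i j) ^ 2)

noncomputable def vnorm {n : ℕ} (x : Fin n → ℝ) : ℝ :=
  Real.sqrt (∑ i, (x i) ^ 2)

noncomputable def intJac {n : ℕ} (J : (Fin n → ℝ) → Matrix (Fin n) (Fin n) ℝ)
    (x u : Fin n → ℝ) : Matrix (Fin n) (Fin n) ℝ :=
  Matrix.of fun i j => ∫ t in (0:ℝ)..(1:ℝ), J (x + t • u) i j

section Norms

variable {n : ℕ}

lemma vnorm_nonneg (x : Fin n → ℝ) : 0 ≤ vnorm x := Real.sqrt_nonneg _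

lemma vnorm_sq (x : Fin n → ℝ) : vnorm x ^ 2 = x ⬝ᵥ x := by
  rw [vnorm, Real.sq_sqrt (Finset.sum_nonneg fun _ _ => sq_nonneg _)]
  simp only [dotProduct, sq]

lemma vnorm_eq_norm_toLp (x : Fin n → ℝ) : vnorm x = ‖WithLp.toLp 2 x‖ := by
  simp [vnorm, EuclideanSpace.norm_eq]

lemma vnorm_neg (x : Fin n → ℝ) : vnorm (-x) = vnorm x := by
  simp [vnorm]

lemma vnorm_sub_le (x y : Fin n → ℝ) : vnorm (x - y) ≤ vnorm x + vnorm y := by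
  simpa only [vnorm_eq_norm_toLp, WithLp.toLp_sub] using norm_sub_le _ _

lemma frobNorm_nonneg (A : Matrix (Fin n) (Fin n) ℝ) : 0 ≤ frobNorm A :=
  Real.sqrt_nonneg _

lemma frobNorm_sq (A : Matrix (Fin n) (Fin n) ℝ) :
    frobNorm A ^ 2 = ∑ i, ∑ j, A i j ^ 2 :=
  Real.sq_sqrt (Finset.sum_nonneg fun _ _ => Finset.sum_nonneg fun _ _ => sq_nonneg _)

lemma specNorm_nonneg (A : Matrix (Fin n) (Fin n) ℝ) : 0 ≤ specNorm A :=
  norm_nonneg _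

lemma vnorm_mulVec_le_specNorm_mul (A : Matrix (Fin n) (Fin n) ℝ) (x : Fin n → ℝ) :
    vnorm (A *ᵥ x) ≤ specNorm A * vnorm x := by
  rw [vnorm_eq_norm_toLp, vnorm_eq_norm_toLp, ← toEuclideanCLM_toLp]
  exact (toEuclideanCLM (𝕜 := ℝ) A).le_opNorm _

lemma vnorm_mulVec_le_frobNorm_mul (A : Matrix (Fin n) (Fin n) ℝ) (x : Fin n → ℝ) :
    vnorm (A *ᵥ x) ≤ frobNorm A * vnorm x := by
  rw [vnorm, frobNorm, vnorm, ← Real.sqrt_mul (by positivity), Finset.sum_mul]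
  gcongr with i
  rw [mulVec, dotProduct]
  exact Finset.sum_mul_sq_le_sq_mul_sq _ (A i) x

lemma frobNorm_add_vecMulVec_sq (E : Matrix (Fin n) (Fin n) ℝ) (a u : Fin n → ℝ) :
    frobNorm (E + vecMulVec a u) ^ 2
      = frobNorm E ^ 2 + 2 * (a ⬝ᵥ E *ᵥ u) + (a ⬝ᵥ a) * (u ⬝ᵥ u) := by
  simp only [frobNorm_sq, dotProduct, mulVec]
  rw [Finset.sum_mul_sum]
  simp only [Finset.mul_sum, ← Finset.sum_add_distrib, Matrix.add_apply, vecMulVec_apply]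
  refine Finset.sum_congr rfl fun i _ => Finset.sum_congr rfl fun j _ => ?_
  ring

end Norms

section BroydenUpdate

variable {n : ℕ}

lemma frobNorm_broyden_update_sq (E G : Matrix (Fin n) (Fin n) ℝ) (u : Fin n → ℝ) :
    frobNorm (E + (u ⬝ᵥ u)⁻¹ • vecMulVec (G *ᵥ u - E *ᵥ u) u) ^ 2
      = frobNorm E ^ 2 - vnorm (E *ᵥ u) ^ 2 / (u ⬝ᵥ u) + vnorm (G *ᵥ u) ^ 2 / (u ⬝ᵥ u) := by
  set c := u ⬝ᵥ u
  have hc : c⁻¹ ^ 2 * c = c⁻¹ := by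
    rcases eq_or_ne c 0 with h | h
    · simp [h]
    · field_simp
  rw [← smul_vecMulVec, frobNorm_add_vecMulVec_sq, vnorm_sq, vnorm_sq]
  simp only [smul_dotProduct, dotProduct_smul, sub_dotProduct, dotProduct_sub, smul_eq_mul,
    dotProduct_comm (E *ᵥ u) (G *ᵥ u)]
  linear_combination (G *ᵥ u ⬝ᵥ G *ᵥ u - 2 * (G *ᵥ u ⬝ᵥ E *ᵥ u) + E *ᵥ u ⬝ᵥ E *ᵥ u) * hc

lemma frobNorm_broyden_update_sq_le (E G : Matrix (Fin n) (Fin n) ℝ) (u : Fin n → ℝ) :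
    frobNorm (E + (u ⬝ᵥ u)⁻¹ • vecMulVec (G *ᵥ u - E *ᵥ u) u) ^ 2
      ≤ frobNorm E ^ 2 - vnorm (G *ᵥ u - E *ᵥ u) ^ 2 / (u ⬝ᵥ u)
        + 2 * (frobNorm E * specNorm G + specNorm G ^ 2) := by
  have he := vnorm_mulVec_le_frobNorm_mul E u
  have hg := vnorm_mulVec_le_specNorm_mul G u
  have hd := vnorm_sub_le (G *ᵥ u) (E *ᵥ u)
  have hσ := frobNorm_nonneg E
  have hτ := specNorm_nonneg G
  have hsq : vnorm (G *ᵥ u) ^ 2 + vnorm (G *ᵥ u - E *ᵥ u) ^ 2 - vnorm (E *ᵥ u) ^ 2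
      ≤ 2 * (frobNorm E * specNorm G + specNorm G ^ 2) * (u ⬝ᵥ u) := by
    rw [← vnorm_sq u]
    nlinarith [mul_le_mul hg he (vnorm_nonneg _) (mul_nonneg hτ (vnorm_nonneg u)),
      pow_le_pow_left₀ (vnorm_nonneg _) hd 2, pow_le_pow_left₀ (vnorm_nonneg _) hg 2]
  have hdiv := div_le_of_le_mul₀ (vnorm_sq u ▸ sq_nonneg (vnorm u))
    (by nlinarith [mul_nonneg hσ hτ]) hsq
  rw [sub_div, add_div] at hdiv
  rw [frobNorm_broyden_update_sq]
  linarith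

end BroydenUpdate

section IntegralMeanJacobian

variable {n : ℕ} {F : (Fin n → ℝ) → (Fin n → ℝ)} {J : (Fin n → ℝ) → Matrix (Fin n) (Fin n) ℝ}

lemma hasDerivAt_comp_add_smul
    (hF : ∀ z, HasFDerivAt F (LinearMap.toContinuousLinearMap ((J z).mulVecLin)) z)
    (x u : Fin n → ℝ) (t : ℝ) :
    HasDerivAt (fun s : ℝ => F (x + s • u)) (J (x + t • u) *ᵥ u) t := by
  have hline : HasDerivAt (fun s : ℝ => x + s • u) u t := by
    simpa using ((hasDerivAt_id t).smul_const u).const_add x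
  simpa [Function.comp_def] using (hF (x + t • u)).comp_hasDerivAt t hline

lemma intJac_mulVec_apply (hJc : Continuous J) (x u : Fin n → ℝ) (i : Fin n) :
    (intJac J x u *ᵥ u) i = ∫ t in (0:ℝ)..1, (J (x + t • u) *ᵥ u) i := by
  have hcont : ∀ j, Continuous fun t : ℝ => J (x + t • u) i j * u j := by fun_prop
  simp only [mulVec, dotProduct, intJac, of_apply, ← intervalIntegral.integral_mul_const]
  rw [intervalIntegral.integral_finsetSum fun j _ => (hcont j).intervalIntegrable 0 1]

lemma sub_eq_intJac_mulVec
    (hF : ∀ z, HasFDerivAt F (LinearMap.toContinuousLinearMap ((J z).mulVecLin)) z)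
    (hJc : Continuous J) (x u : Fin n → ℝ) :
    F (x + u) - F x = intJac J x u *ᵥ u := by
  funext i
  have hcont : Continuous fun t : ℝ => (J (x + t • u) *ᵥ u) i := by fun_prop
  rw [Pi.sub_apply, intJac_mulVec_apply hJc, intervalIntegral.integral_eq_sub_of_hasDerivAt
    (fun t _ => hasDerivAt_pi.mp (hasDerivAt_comp_add_smul hF x u t) i)
    (hcont.intervalIntegrable 0 1)]
  simp

end IntegralMeanJacobian

lemma div_mul_div_le_div {a c : ℝ} (ha : 0 ≤ a) (hc : 0 ≤ c) (b : ℝ) : a / b * (b / c) ≤ a / c :=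
  calc a / b * (b / c) = a / c * (b / b) := by ring
    _ ≤ a / c := mul_le_of_le_one_right (div_nonneg ha hc) (div_self_le_one b)

section ShiftedUpdate

variable {n : ℕ} (A B M Js : Matrix (Fin n) (Fin n) ℝ) (u : Fin n → ℝ)

lemma mulVec_sub_mulVec_shift :
    A *ᵥ (M *ᵥ u - B *ᵥ u) = (A * (M - Js)) *ᵥ u - (A * (B - Js)) *ᵥ u := by
  simp only [Matrix.mul_sub, Matrix.sub_mulVec, ← Matrix.mulVec_mulVec, Matrix.mulVec_sub]
  abel

lemma mul_broyden_update_sub :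
    A * (B + (u ⬝ᵥ u)⁻¹ • vecMulVec (M *ᵥ u - B *ᵥ u) u - Js)
      = A * (B - Js) + (u ⬝ᵥ u)⁻¹ • vecMulVec ((A * (M - Js)) *ᵥ u - (A * (B - Js)) *ᵥ u) u := by
  rw [← mulVec_sub_mulVec_shift, ← mul_vecMulVec, ← Matrix.mul_smul, ← Matrix.mul_add,
    add_sub_right_comm]

end ShiftedUpdate

theorem stmt4_general {n : ℕ} (F : (Fin n → ℝ) → (Fin n → ℝ))
    (J : (Fin n → ℝ) → Matrix (Fin n) (Fin n) ℝ)
    (hF : ∀ z, HasFDerivAt F (LinearMap.toContinuousLinearMap ((J z).mulVecLin)) z)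
    (hJc : Continuous J)
    (xs : Fin n → ℝ)
    (x : ℕ → Fin n → ℝ) (B : ℕ → Matrix (Fin n) (Fin n) ℝ)
    (hBk : ∀ k, IsUnit (B k).det)
    (hx : ∀ k, x (k + 1) = x k - (B k)⁻¹ *ᵥ F (x k))
    (hB : ∀ k, B (k + 1) = B k + ((x (k + 1) - x k) ⬝ᵥ (x (k + 1) - x k))⁻¹ •
        vecMulVec (F (x (k + 1)) - F (x k) - B k *ᵥ (x (k + 1) - x k)) (x (k + 1) - x k)) :
    ∀ k : ℕ,
      frobNorm ((J xs)⁻¹ * (B (k + 1) - J xs)) ^ 2 ≤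
        frobNorm ((J xs)⁻¹ * (B k - J xs)) ^ 2
          - (vnorm ((J xs)⁻¹ *ᵥ F (x (k + 1))) ^ 2 / vnorm ((J xs)⁻¹ *ᵥ F (x k)) ^ 2) *
              (vnorm ((J xs)⁻¹ *ᵥ (B k *ᵥ (x (k + 1) - x k))) ^ 2
                / vnorm (x (k + 1) - x k) ^ 2)
          + 2 * (frobNorm ((J xs)⁻¹ * (B k - J xs)) *
                specNorm ((J xs)⁻¹ * (intJac J (x k) (x (k + 1) - x k) - J xs))
              + specNorm ((J xs)⁻¹ * (intJac J (x k) (x (k + 1) - x k) - J xs)) ^ 2) := by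
  intro k
  set u := x (k + 1) - x k with hu
  set M := intJac J (x k) u
  have hBu : B k *ᵥ u = -F (x k) := by
    rw [hu, hx k, sub_sub_cancel_left, mulVec_neg, mulVec_mulVec, mul_nonsing_inv _ (hBk k),
      one_mulVec]
  have hy : F (x (k + 1)) - F (x k) = M *ᵥ u := by
    simpa [u] using sub_eq_intJac_mulVec hF hJc (x k) u
  have hupdate : B (k + 1) = B k + (u ⬝ᵥ u)⁻¹ • vecMulVec (M *ᵥ u - B k *ᵥ u) u := by
    rw [hB k, hy]
  have hresidual : (J xs)⁻¹ *ᵥ F (x (k + 1))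
      = ((J xs)⁻¹ * (M - J xs)) *ᵥ u - ((J xs)⁻¹ * (B k - J xs)) *ᵥ u := by
    rw [← mulVec_sub_mulVec_shift, ← hy, hBu, sub_neg_eq_add, sub_add_cancel]
  have hstep := frobNorm_broyden_update_sq_le ((J xs)⁻¹ * (B k - J xs)) ((J xs)⁻¹ * (M - J xs)) u
  have hratio := div_mul_div_le_div (sq_nonneg (vnorm ((J xs)⁻¹ *ᵥ F (x (k + 1)))))
    (sq_nonneg (vnorm u)) (vnorm ((J xs)⁻¹ *ᵥ F (x k)) ^ 2)
  rw [← hresidual] at hstep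
  rw [vnorm_sq u] at hratio
  rw [hupdate, mul_broyden_update_sub, ← hresidual, hBu, mulVec_neg, vnorm_neg, vnorm_sq u]
  linarith

/-- One-step Frobenius-measure inequality for Broyden's "good" update, with the ratio
`λ_{k+1}²/λ_k²`:
`σ_{k+1}² ≤ σ_k² − (λ_{k+1}²/λ_k²)·‖J*⁻¹ B_k u_k‖²/‖u_k‖² + 2(σ_k‖J̄_k‖ + ‖J̄_k‖²)`. -/
theorem stmt4 {n : ℕ} (F : (Fin n → ℝ) → (Fin n → ℝ))
    (J : (Fin n → ℝ) → Matrix (Fin n) (Fin n) ℝ)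
    (hF : ∀ z, HasFDerivAt F (LinearMap.toContinuousLinearMap ((J z).mulVecLin)) z)
    (hJc : Continuous J)
    (xs : Fin n → ℝ) (hxs : F xs = 0) (hJs : IsUnit (J xs).det)
    (x : ℕ → Fin n → ℝ) (B : ℕ → Matrix (Fin n) (Fin n) ℝ)
    (hBk : ∀ k, IsUnit (B k).det) (hFk : ∀ k, F (x k) ≠ 0)
    (hx : ∀ k, x (k + 1) = x k - (B k)⁻¹ *ᵥ F (x k))
    (hB : ∀ k, B (k + 1) = B k + ((x (k + 1) - x k) ⬝ᵥ (x (k + 1) - x k))⁻¹ •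
        vecMulVec (F (x (k + 1)) - F (x k) - B k *ᵥ (x (k + 1) - x k)) (x (k + 1) - x k)) :
    ∀ k : ℕ,
      frobNorm ((J xs)⁻¹ * (B (k + 1) - J xs)) ^ 2 ≤
        frobNorm ((J xs)⁻¹ * (B k - J xs)) ^ 2
          - (vnorm ((J xs)⁻¹ *ᵥ F (x (k + 1))) ^ 2 / vnorm ((J xs)⁻¹ *ᵥ F (x k)) ^ 2) *
              (vnorm ((J xs)⁻¹ *ᵥ (B k *ᵥ (x (k + 1) - x k))) ^ 2
                / vnorm (x (k + 1) - x k) ^ 2)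
          + 2 * (frobNorm ((J xs)⁻¹ * (B k - J xs)) *
                specNorm ((J xs)⁻¹ * (intJac J (x k) (x (k + 1) - x k) - J xs))
              + specNorm ((J xs)⁻¹ * (intJac J (x k) (x (k + 1) - x k) - J xs)) ^ 2) :=
  stmt4_general F J hF hJc xs x B hBk hx hB
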